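/- On an infinite-dimensional separable Hilbert space, every density operator lies on the algebraic boundary of the set of states; equivalently, no density operator ϱ satisfies |v⟩⟨v| ≤_C ϱ for all unit vectors |v⟩. Consequently b(ϱ) = 0 for every state ϱ. -/

import Mathlib

/-! The diagonal entries `⟪eₙ, ϱ eₙ⟫` of a state in a Hilbert basis indexed by `ℕ` sum to 1,
so along a subsequence `φ` they lie below `4⁻ᵏ`. The unit vector `v` with
`‖⟪e (φ k), v⟫‖² = 2⁻⁽ᵏ⁺¹⁾` (and orthogonal to the other basis vectors) then admits no bound
`t • |v⟩⟨v| ≤ ϱ` with `t > 0`: testing it on `e (φ k)` gives `t 2⁻⁽ᵏ⁺¹⁾ < 4⁻ᵏ` for large `k`.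
Both a decomposition `ϱ = t |v⟩⟨v| + (1 - t) z` and a state `(ϱ - s |v⟩⟨v|) / (1 - s)` would
give such a bound, so the weight of `|v⟩⟨v|` at `ϱ`, and with it the boundariness of `ϱ`, is 0. -/

open scoped InnerProductSpace

/-- The weight function `t_y(x) = sup{ t ∈ [0,1) : (y - t·x)/(1-t) ∈ Z }`. -/
noncomputable def weight {V : Type*} [AddCommGroup V] [Module ℝ V] (Z : Set V) (y x : V) : ℝ :=
  sSup {t : ℝ | 0 ≤ t ∧ t < 1 ∧ (1 - t)⁻¹ • (y - t • x) ∈ Z}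

/-- The boundariness `b(y) = inf_{x ∈ Z} t_y(x)`. -/
noncomputable def bdness {V : Type*} [AddCommGroup V] [Module ℝ V] (Z : Set V) (y : V) : ℝ :=
  sInf (weight Z y '' Z)

/-- The set of states on a Hilbert space `H`: positive (trace-class) operators whose trace,
computed in any Hilbert basis, is 1. -/
def States (H : Type*) [NormedAddCommGroup H] [InnerProductSpace ℂ H] [CompleteSpace H] :
    Set (H →L[ℂ] H) :=
  {T | T.IsPositive ∧ ∀ b : HilbertBasis ℕ ℂ H,
    HasSum (fun i => (⟪b i, T (b i)⟫_ℂ).re) 1}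

open Filter Topology InnerProductSpace

theorem Orthonormal.countable {𝕜 E ι : Type*} [RCLike 𝕜] [NormedAddCommGroup E]
    [InnerProductSpace 𝕜 E] [TopologicalSpace.SeparableSpace E] {v : ι → E}
    (hv : Orthonormal 𝕜 v) : Countable ι := by
  refine Pairwise.countable_of_isOpen_disjoint (s := fun i => Metric.ball (v i) (1 / 2))
    (fun i j hij => Metric.ball_disjoint_ball ?_) (fun _ => Metric.isOpen_ball)
    (fun _ => Metric.nonempty_ball.2 (by norm_num))
  have hsq : dist (v i) (v j) ^ 2 = 2 := by
    rw [dist_eq_norm, @norm_sub_sq 𝕜, hv.inner_eq_zero hij, hv.norm_eq_one, hv.norm_eq_one]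
    norm_num
  nlinarith [dist_nonneg (x := v i) (y := v j)]

theorem nonempty_hilbertBasis_nat (𝕜 E : Type*) [RCLike 𝕜] [NormedAddCommGroup E]
    [InnerProductSpace 𝕜 E] [CompleteSpace E] [TopologicalSpace.SeparableSpace E]
    (hinf : ¬ FiniteDimensional 𝕜 E) : Nonempty (HilbertBasis ℕ 𝕜 E) := by
  obtain ⟨w, b, -⟩ := exists_hilbertBasis 𝕜 E
  have : Countable w := b.orthonormal.countable
  have : Infinite w := by
    by_contra hfin
    rw [not_infinite_iff_finite] at hfin
    have := Fintype.ofFinite w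
    exact hinf (b.toOrthonormalBasis.toBasis.finiteDimensional_of_finite)
  obtain ⟨g⟩ := nonempty_equiv_of_countable (α := ℕ) (β := w)
  refine ⟨HilbertBasis.mk (b.orthonormal.comp g g.injective) ?_⟩
  rw [g.surjective.range_comp, b.dense_span]

theorem exists_hasSum_one_forall_exists_lt_mul {d : ℕ → ℝ} (hd : Tendsto d atTop (𝓝 0)) :
    ∃ a : ℕ → ℝ, (∀ n, 0 ≤ a n) ∧ HasSum a 1 ∧ ∀ t > 0, ∃ n, d n < t * a n := by
  obtain ⟨φ, hφ, hdφ⟩ : ∃ φ : ℕ → ℕ, StrictMono φ ∧ ∀ k, d (φ k) < (4 : ℝ)⁻¹ ^ k :=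
    extraction_forall_of_eventually fun k => hd.eventually_lt_const (by positivity)
  set a : ℕ → ℝ := Function.extend φ (fun k => (2 : ℝ)⁻¹ ^ (k + 1)) 0
  have ha : ∀ k, a (φ k) = (2 : ℝ)⁻¹ ^ (k + 1) := fun k => hφ.injective.extend_apply _ _ k
  refine ⟨a, fun n => ?_, ?_, fun t ht => ?_⟩
  · by_cases hn : ∃ k, φ k = n
    · obtain ⟨k, rfl⟩ := hn
      rw [ha]
      positivity
    · simp [a, Function.extend_apply' _ (0 : ℕ → ℝ) n hn]
  · rw [← hφ.injective.hasSum_iff fun n hn => Function.extend_apply' _ (0 : ℕ → ℝ) n hn]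
    have hgeom :=
      (hasSum_geometric_of_lt_one (r := (2 : ℝ)⁻¹) (by norm_num) (by norm_num)).mul_left 2⁻¹
    rw [show (2 : ℝ)⁻¹ * (1 - 2⁻¹)⁻¹ = 1 by norm_num] at hgeom
    exact hgeom.congr_fun fun k => (ha k).trans (pow_succ' _ _)
  obtain ⟨k, hk⟩ : ∃ k : ℕ, (2 : ℝ)⁻¹ ^ k < t / 2 :=
    exists_pow_lt_of_lt_one (by positivity) (by norm_num)
  refine ⟨φ k, ?_⟩
  calc d (φ k) < (4 : ℝ)⁻¹ ^ k := hdφ k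
    _ = (2 : ℝ)⁻¹ ^ k * (2 : ℝ)⁻¹ ^ k := by rw [← mul_pow]; norm_num
    _ ≤ t / 2 * (2 : ℝ)⁻¹ ^ k := by gcongr
    _ = t * a (φ k) := by rw [ha, pow_succ]; ring

theorem HilbertBasis.exists_norm_eq_one_norm_inner_sq_eq {ι 𝕜 E : Type*} [RCLike 𝕜]
    [NormedAddCommGroup E] [InnerProductSpace 𝕜 E] (b : HilbertBasis ι 𝕜 E) {a : ι → ℝ}
    (ha : ∀ i, 0 ≤ a i) (hsum : HasSum a 1) :
    ∃ v : E, ‖v‖ = 1 ∧ ∀ i, ‖⟪b i, v⟫_𝕜‖ ^ 2 = a i := by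
  have hc : ∀ i, ‖((√(a i) : ℝ) : 𝕜)‖ ^ 2 = a i := fun i => by simp [Real.sq_sqrt (ha i)]
  let c : lp (fun _ : ι => 𝕜) 2 :=
    ⟨fun i => ((√(a i) : ℝ) : 𝕜), memℓp_gen (by simpa [Real.sq_sqrt, ha] using hsum.summable)⟩
  refine ⟨b.repr.symm c, ?_, fun i => ?_⟩
  · have hnorm := lp.norm_rpow_eq_tsum (p := 2) (by norm_num) c
    simp only [ENNReal.toReal_ofNat, Real.rpow_two] at hnorm
    have hsq : ‖c‖ ^ 2 = 1 := hnorm.trans (hsum.congr_fun hc).tsum_eq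
    rw [LinearIsometryEquiv.norm_map]
    exact (pow_eq_one_iff_of_nonneg (norm_nonneg c) two_ne_zero).mp hsq
  · rw [← HilbertBasis.repr_apply_apply, LinearIsometryEquiv.apply_symm_apply]
    exact hc i

section Operators

variable {H : Type*} [NormedAddCommGroup H] [InnerProductSpace ℂ H]

theorem re_inner_smul_apply (T : H →L[ℂ] H) (t : ℝ) (w : H) :
    (⟪w, (t • T) w⟫_ℂ).re = t * (⟪w, T w⟫_ℂ).re := by
  rw [smul_apply, inner_smul_right_eq_smul, Complex.smul_re, smul_eq_mul]

theorem re_inner_rankOne_self_apply (v w : H) :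
    (⟪w, rankOne ℂ v v w⟫_ℂ).re = ‖⟪v, w⟫_ℂ‖ ^ 2 := by
  rw [rankOne_apply, inner_smul_right, ← inner_conj_symm w v, mul_comm, RCLike.conj_mul]
  norm_cast

theorem ContinuousLinearMap.le_of_sub_eq_smul {x y z : H →L[ℂ] H} (hz : z.IsPositive) {r : ℝ}
    (hr : 0 ≤ r) (h : y - x = r • z) : x ≤ y := by
  rw [ContinuousLinearMap.le_def, h, ← Complex.coe_smul]
  exact hz.smul_of_nonneg (RCLike.ofReal_nonneg.mpr hr)

theorem HilbertBasis.exists_forall_not_smul_rankOne_le (b : HilbertBasis ℕ ℂ H) {ϱ : H →L[ℂ] H}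
    (hϱ : Tendsto (fun n => (⟪b n, ϱ (b n)⟫_ℂ).re) atTop (𝓝 0)) :
    ∃ v : H, ‖v‖ = 1 ∧ ∀ t : ℝ, 0 < t → ¬ t • rankOne ℂ v v ≤ ϱ := by
  obtain ⟨a, ha, hsum, hlt⟩ := exists_hasSum_one_forall_exists_lt_mul hϱ
  obtain ⟨v, hv, hva⟩ := b.exists_norm_eq_one_norm_inner_sq_eq ha hsum
  refine ⟨v, hv, fun t ht hle => ?_⟩
  obtain ⟨n, hn⟩ := hlt t ht
  have hpos := ((ContinuousLinearMap.le_def _ _).mp hle).re_inner_nonneg_right (b n)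
  rw [sub_apply, inner_sub_right, map_sub, RCLike.re_to_complex, RCLike.re_to_complex,
    re_inner_smul_apply, re_inner_rankOne_self_apply, norm_inner_symm, hva] at hpos
  linarith

end Operators

theorem rankOne_self_mem_states {H : Type*} [NormedAddCommGroup H] [InnerProductSpace ℂ H]
    [CompleteSpace H] {v : H} (hv : ‖v‖ = 1) : rankOne ℂ v v ∈ States H := by
  refine ⟨isPositive_rankOne_self v, fun b => ?_⟩
  have h := Complex.hasSum_re (b.hasSum_inner_mul_inner v v)
  rw [← RCLike.re_to_complex, inner_self_eq_norm_sq, hv, one_pow] at h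
  exact h.congr_fun fun i => by rw [rankOne_apply, inner_smul_right]

theorem exists_forall_not_smul_rankOne_le_of_mem_states {H : Type*} [NormedAddCommGroup H]
    [InnerProductSpace ℂ H] [CompleteSpace H] [TopologicalSpace.SeparableSpace H]
    (hinf : ¬ FiniteDimensional ℂ H) {ϱ : H →L[ℂ] H} (hϱ : ϱ ∈ States H) :
    ∃ v : H, ‖v‖ = 1 ∧ ∀ t : ℝ, 0 < t → ¬ t • rankOne ℂ v v ≤ ϱ := by
  obtain ⟨b⟩ := nonempty_hilbertBasis_nat ℂ H hinf
  exact b.exists_forall_not_smul_rankOne_le (hϱ.2 b).summable.tendsto_atTop_zero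

section Weight

variable {V : Type*} [AddCommGroup V] [Module ℝ V] {Z : Set V} {y x : V}

theorem zero_mem_setOf_weight (hy : y ∈ Z) :
    (0 : ℝ) ∈ {t : ℝ | 0 ≤ t ∧ t < 1 ∧ (1 - t)⁻¹ • (y - t • x) ∈ Z} :=
  ⟨le_rfl, one_pos, by simpa using hy⟩

theorem weight_nonneg (hy : y ∈ Z) (x : V) : 0 ≤ weight Z y x :=
  le_csSup ⟨1, fun _ ht => ht.2.1.le⟩ (zero_mem_setOf_weight hy)

theorem weight_eq_zero (hy : y ∈ Z)
    (h : ∀ s : ℝ, 0 < s → s < 1 → (1 - s)⁻¹ • (y - s • x) ∉ Z) : weight Z y x = 0 := by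
  have hset : {t : ℝ | 0 ≤ t ∧ t < 1 ∧ (1 - t)⁻¹ • (y - t • x) ∈ Z} = {0} := by
    refine Set.eq_singleton_iff_unique_mem.2 ⟨zero_mem_setOf_weight hy, ?_⟩
    rintro s ⟨hs0, hs1, hs⟩
    by_contra hne
    exact h s (lt_of_le_of_ne hs0 (Ne.symm hne)) hs1 hs
  rw [weight, hset, csSup_singleton]

theorem bdness_eq_zero (hy : y ∈ Z) (hx : x ∈ Z) (h : weight Z y x = 0) : bdness Z y = 0 := by
  have hlb : ∀ r ∈ weight Z y '' Z, 0 ≤ r := Set.forall_mem_image.2 fun z _ => weight_nonneg hy z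
  exact le_antisymm (csInf_le ⟨0, hlb⟩ ⟨x, hx, h⟩) (le_csInf ⟨0, x, hx, h⟩ hlb)

end Weight

theorem infinite_dim_states_all_boundary {H : Type*} [NormedAddCommGroup H]
    [InnerProductSpace ℂ H] [CompleteSpace H] [TopologicalSpace.SeparableSpace H]
    (hinf : ¬ FiniteDimensional ℂ H)
    (ϱ : H →L[ℂ] H) (hϱ : ϱ ∈ States H) :
    (∃ x ∈ States H, weight (States H) ϱ x = 0) ∧
    (¬ ∀ v : H, ‖v‖ = 1 → ∃ t : ℝ, 0 < t ∧ t ≤ 1 ∧ ∃ z ∈ States H,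
        ϱ = t • ((innerSL ℂ v).smulRight v) + (1 - t) • z) ∧
    bdness (States H) ϱ = 0 := by
  obtain ⟨v, hv, hnot⟩ := exists_forall_not_smul_rankOne_le_of_mem_states hinf hϱ
  have hx : rankOne ℂ v v ∈ States H := rankOne_self_mem_states hv
  have hw : weight (States H) ϱ (rankOne ℂ v v) = 0 := by
    refine weight_eq_zero hϱ fun s hs hs1 hz => hnot s hs ?_
    refine ContinuousLinearMap.le_of_sub_eq_smul hz.1 (sub_nonneg.2 hs1.le) ?_
    rw [smul_inv_smul₀ (sub_ne_zero.2 hs1.ne')]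
  refine ⟨⟨_, hx, hw⟩, fun hall => ?_, bdness_eq_zero hϱ hx hw⟩
  obtain ⟨t, ht, ht1, z, hz, hϱz⟩ := hall v hv
  refine hnot t ht (ContinuousLinearMap.le_of_sub_eq_smul hz.1 (sub_nonneg.2 ht1) ?_)
  rw [hϱz, ← rankOne_def, add_sub_cancel_left]
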